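/- arXiv:2501.16315 — 3 statements merged into one kernel-verified Lean document; each statement's English description precedes it below -/
import Mathlib

section
/- Let μ be a probability measure on ℝⁿ, μ_N the empirical measure of an i.i.d. sample of size N, and S₁,…,S_m pairwise disjoint Borel sets with union T. Then 𝔼[∑_{j=1}^m |μ_N(S_j) − μ(S_j)|] ≤ (m μ(T)/N)^{1/2}. -/
open MeasureTheory Metric Set ProbabilityTheory
open scoped ENNReal

noncomputable section

/-- The empirical measure `μ_N = (1/N) ∑ᵢ δ_{Xᵢ(ω)}` associated with a sample `X`. -/
def empMeas {Ω : Type*} [MeasurableSpace Ω] {n N : ℕ}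
    (X : Fin N → Ω → EuclideanSpace ℝ (Fin n)) (ω : Ω) :
    Measure (EuclideanSpace ℝ (Fin n)) :=
  (N : ℝ≥0∞)⁻¹ • ∑ i : Fin N, Measure.dirac (X i ω)

/-! `μ_N(S)` is the mean of the `N` independent `[0, 1]`-valued variables `1_S(Xᵢ)` of mean
`μ(S)`, so its variance is at most `μ(S)/N`, and Cauchy–Schwarz in `L²` gives
`𝔼|μ_N(S) − μ(S)| ≤ √(μ(S)/N)`. Summing over `j`, Cauchy–Schwarz in `ℝᵐ` bounds
`∑ⱼ √(μ(Sⱼ)/N)` by `√(m ∑ⱼ μ(Sⱼ)/N)`, and `∑ⱼ μ(Sⱼ) = μ(T)` by disjointness. -/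

lemma Real.sum_sqrt_le_sqrt_card_mul_sum {ι : Type*} (s : Finset ι) {a : ι → ℝ}
    (ha : ∀ i, 0 ≤ a i) : ∑ i ∈ s, √(a i) ≤ √(s.card * ∑ i ∈ s, a i) := by
  simpa [Real.sqrt_mul (Nat.cast_nonneg _)] using
    Real.sum_sqrt_mul_sqrt_le s (fun _ => zero_le_one) ha

lemma Set.indicator_one_mem_Icc {α : Type*} (s : Set α) (x : α) :
    s.indicator (1 : α → ℝ) x ∈ Icc 0 1 := by
  by_cases h : x ∈ s <;> simp [h]

section Variance

variable {Ω : Type*} [MeasurableSpace Ω] {P : Measure Ω}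

lemma variance_mean_le_div_card {ι : Type*} [Fintype ι] {Y : ι → Ω → ℝ} {v : ℝ}
    (hY : ∀ i, MemLp (Y i) 2 P) (hindep : Pairwise fun i j => IndepFun (Y i) (Y j) P)
    (hv : ∀ i, Var[Y i; P] ≤ v) :
    Var[fun ω => (Fintype.card ι : ℝ)⁻¹ * ∑ i, Y i ω; P] ≤ v / Fintype.card ι := by
  set c : ℝ := (Fintype.card ι : ℝ)
  have h_sum : Var[fun ω => ∑ i, Y i ω; P] ≤ c * v := by
    have := IndepFun.variance_sum (s := Finset.univ) (fun i _ => hY i)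
      (fun i _ j _ hij => hindep hij)
    simp only [Finset.sum_fn] at this
    rw [this]
    simpa [c] using Finset.sum_le_sum fun i (_ : i ∈ Finset.univ) => hv i
  rw [variance_const_mul]
  calc c⁻¹ ^ 2 * Var[fun ω => ∑ i, Y i ω; P] ≤ c⁻¹ ^ 2 * (c * v) := by gcongr
    _ = v / c := by
      rcases eq_or_ne c 0 with hc | hc
      · simp [hc]
      · field_simp

variable [IsProbabilityMeasure P]

lemma integral_abs_sub_integral_le_sqrt_variance {g : Ω → ℝ} (hg : MemLp g 2 P) :
    ∫ ω, |g ω - P[g]| ∂P ≤ √(Var[g; P]) := by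
  set d : Ω → ℝ := fun ω => |g ω - P[g]|
  have hd : MemLp d 2 P := (hg.sub (memLp_const _)).abs
  have hd_sq : P[d ^ 2] = Var[g; P] := by
    simp only [d, variance_eq_integral hg.aemeasurable, Pi.pow_apply, sq_abs]
  apply Real.le_sqrt_of_sq_le
  linarith [variance_nonneg d P, variance_eq_sub hd]

lemma variance_le_integral_of_ae_mem_Icc {Y : Ω → ℝ} (hY : ∀ᵐ ω ∂P, Y ω ∈ Icc 0 1)
    (hY_meas : AEMeasurable Y P) : Var[Y; P] ≤ P[Y] := by
  have := variance_le_sub_mul_sub hY hY_meas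
  nlinarith [sq_nonneg P[Y]]

end Variance

section Indicator

variable {Ω E : Type*} [MeasurableSpace Ω] [MeasurableSpace E] {P : Measure Ω} {μ : Measure E}
  {Z : Ω → E} {S : Set E}

lemma aemeasurable_of_map_eq [NeZero μ] (hZ : P.map Z = μ) : AEMeasurable Z P :=
  aemeasurable_of_map_neZero (hZ ▸ inferInstance)

lemma memLp_indicator_one_comp [IsFiniteMeasure P] (hS : MeasurableSet S)
    (hZ : AEMeasurable Z P) (p : ℝ≥0∞) : MemLp (fun ω => S.indicator (1 : E → ℝ) (Z ω)) p P :=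
  memLp_of_bounded (a := 0) (b := 1)
    (ae_of_all _ fun ω => S.indicator_one_mem_Icc (Z ω))
    ((measurable_one.indicator hS).comp_aemeasurable hZ).aestronglyMeasurable p

lemma integral_indicator_one_comp [NeZero μ] (hS : MeasurableSet S) (hZ : P.map Z = μ) :
    ∫ ω, S.indicator 1 (Z ω) ∂P = μ.real S := by
  rw [← integral_map (f := S.indicator 1) (aemeasurable_of_map_eq hZ)
    (measurable_one.indicator hS).aestronglyMeasurable, hZ, integral_indicator_one hS]

lemma variance_indicator_one_comp_le [IsProbabilityMeasure P] [NeZero μ] (hS : MeasurableSet S)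
    (hZ : P.map Z = μ) : Var[fun ω => S.indicator (1 : E → ℝ) (Z ω); P] ≤ μ.real S := by
  rw [← integral_indicator_one_comp hS hZ]
  exact variance_le_integral_of_ae_mem_Icc
    (ae_of_all _ fun ω => S.indicator_one_mem_Icc (Z ω))
    ((measurable_one.indicator hS).comp_aemeasurable (aemeasurable_of_map_eq hZ))

end Indicator

section Empirical

variable {Ω : Type*} [MeasurableSpace Ω] {P : Measure Ω} [IsProbabilityMeasure P] {n N : ℕ}
  {μ : Measure (EuclideanSpace ℝ (Fin n))} [IsProbabilityMeasure μ]
  {X : Fin N → Ω → EuclideanSpace ℝ (Fin n)} {S : Set (EuclideanSpace ℝ (Fin n))}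

lemma empMeas_apply_toReal (hS : MeasurableSet S) (ω : Ω) :
    (empMeas X ω S).toReal = (N : ℝ)⁻¹ * ∑ i, S.indicator 1 (X i ω) := by
  rw [empMeas, Measure.smul_apply, smul_eq_mul, Measure.finsetSum_apply, ENNReal.toReal_mul,
    ENNReal.toReal_inv, ENNReal.toReal_natCast,
    ENNReal.toReal_sum fun i _ => measure_ne_top _ _]
  congr 1
  refine Finset.sum_congr rfl fun i _ => ?_
  by_cases h : X i ω ∈ S <;> simp [Measure.dirac_apply' _ hS, h]

variable (hS : MeasurableSet S) (hid : ∀ i, P.map (X i) = μ)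
include hS hid

lemma memLp_empMeas_apply : MemLp (fun ω => (empMeas X ω S).toReal) 2 P := by
  simp_rw [empMeas_apply_toReal hS]
  exact (memLp_finsetSum _ fun i _ =>
    memLp_indicator_one_comp hS (aemeasurable_of_map_eq (hid i)) 2).const_mul _

lemma integral_empMeas_apply (hN : 0 < N) : P[fun ω => (empMeas X ω S).toReal] = μ.real S := by
  have hY i : Integrable (fun ω => S.indicator (1 : EuclideanSpace ℝ (Fin n) → ℝ) (X i ω)) P :=
    (memLp_indicator_one_comp hS (aemeasurable_of_map_eq (hid i)) 1).integrable le_rfl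
  simp_rw [empMeas_apply_toReal hS]
  rw [integral_const_mul, integral_finsetSum _ fun i _ => hY i]
  simp only [integral_indicator_one_comp hS (hid _), Finset.sum_const, Finset.card_univ,
    Fintype.card_fin, nsmul_eq_mul]
  field_simp

lemma variance_empMeas_apply_le (hindep : iIndepFun X P) :
    Var[fun ω => (empMeas X ω S).toReal; P] ≤ μ.real S / N := by
  simp_rw [empMeas_apply_toReal hS]
  simpa using variance_mean_le_div_card
    (fun i => memLp_indicator_one_comp hS (aemeasurable_of_map_eq (hid i)) 2)
    (fun i j hij => (hindep.indepFun hij).comp (measurable_one.indicator hS)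
      (measurable_one.indicator hS))
    (fun i => variance_indicator_one_comp_le hS (hid i))

lemma integral_abs_empMeas_apply_sub_le (hN : 0 < N) (hindep : iIndepFun X P) :
    ∫ ω, |(empMeas X ω S).toReal - μ.real S| ∂P ≤ √(μ.real S / N) := by
  have h := integral_abs_sub_integral_le_sqrt_variance (memLp_empMeas_apply hS hid)
  rw [integral_empMeas_apply hS hid hN] at h
  exact h.trans (Real.sqrt_le_sqrt (variance_empMeas_apply_le hS hid hindep))

end Empirical

theorem stmt_6_general {n N : ℕ} (hN : 0 < N) {Ω : Type*} [MeasurableSpace Ω]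
    (P : Measure Ω) [IsProbabilityMeasure P]
    (μ : Measure (EuclideanSpace ℝ (Fin n))) [IsProbabilityMeasure μ]
    (X : Fin N → Ω → EuclideanSpace ℝ (Fin n))
    (hindep : iIndepFun X P)
    (hid : ∀ i, P.map (X i) = μ)
    (m : ℕ) (Sj : Fin m → Set (EuclideanSpace ℝ (Fin n)))
    (hSmeas : ∀ j, MeasurableSet (Sj j))
    (hdisj : Pairwise (Function.onFun Disjoint Sj))
    (T : Set (EuclideanSpace ℝ (Fin n))) (hT : T = ⋃ j, Sj j) :
    (∫ ω, ∑ j : Fin m, |(empMeas X ω (Sj j)).toReal - (μ (Sj j)).toReal| ∂P)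
      ≤ Real.sqrt (m * (μ T).toReal / N) := by
  have h_int j : Integrable (fun ω => |(empMeas X ω (Sj j)).toReal - μ.real (Sj j)|) P :=
    (((memLp_empMeas_apply (hSmeas j) hid).integrable one_le_two).sub (integrable_const _)).abs
  have h_sum : ∑ j, μ.real (Sj j) = μ.real T := by
    rw [hT, measureReal_iUnion_fintype hdisj hSmeas]
  calc (∫ ω, ∑ j, |(empMeas X ω (Sj j)).toReal - μ.real (Sj j)| ∂P)
      = ∑ j, ∫ ω, |(empMeas X ω (Sj j)).toReal - μ.real (Sj j)| ∂P :=
        integral_finsetSum _ fun j _ => h_int j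
    _ ≤ ∑ j, √(μ.real (Sj j) / N) := Finset.sum_le_sum fun j _ =>
        integral_abs_empMeas_apply_sub_le (hSmeas j) hid hN hindep
    _ ≤ √(m * ∑ j, μ.real (Sj j) / N) := by
        simpa using Real.sum_sqrt_le_sqrt_card_mul_sum (Finset.univ : Finset (Fin m))
          fun j => div_nonneg measureReal_nonneg (Nat.cast_nonneg N)
    _ = √(m * μ.real T / N) := by rw [← Finset.sum_div, h_sum, mul_div_assoc]

/-- For pairwise disjoint Borel sets `S₁,…,S_m` with union `T`,
`𝔼[∑ⱼ |μ_N(Sⱼ) − μ(Sⱼ)|] ≤ (m μ(T)/N)^{1/2}`. -/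
theorem stmt_6 {n N : ℕ} (hN : 0 < N) {Ω : Type*} [MeasurableSpace Ω]
    (P : Measure Ω) [IsProbabilityMeasure P]
    (μ : Measure (EuclideanSpace ℝ (Fin n))) [IsProbabilityMeasure μ]
    (X : Fin N → Ω → EuclideanSpace ℝ (Fin n))
    (hmeas : ∀ i, Measurable (X i))
    (hindep : iIndepFun X P)
    (hid : ∀ i, P.map (X i) = μ)
    (m : ℕ) (Sj : Fin m → Set (EuclideanSpace ℝ (Fin n)))
    (hSmeas : ∀ j, MeasurableSet (Sj j))
    (hdisj : Pairwise (Function.onFun Disjoint Sj))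
    (T : Set (EuclideanSpace ℝ (Fin n))) (hT : T = ⋃ j, Sj j) :
    (∫ ω, ∑ j : Fin m, |(empMeas X ω (Sj j)).toReal - (μ (Sj j)).toReal| ∂P)
      ≤ Real.sqrt (m * (μ T).toReal / N) :=
  stmt_6_general hN P μ X hindep hid m Sj hSmeas hdisj T hT

end
end

section
/- Let Σ ∈ Sym₊(n) be a positive semidefinite symmetric matrix, and let Π be the orthogonal projector onto the span of eigenvectors corresponding to the d largest eigenvalues of Σ (for some choice of orthonormal eigenbasis). Then for every rank-d orthogonal projector Π̃ ∈ P_{d,n}, ‖Σ − Π‖ ≤ ‖Σ − Π̃‖ in operator norm. -/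
/-!
With `εₖ = 1` for `k < d` and `εₖ = 0` otherwise, `Σ - Π = ∑ₖ (λₖ - εₖ) uₖ ⊗ uₖ` has norm at most
`maxₖ |λₖ - εₖ|`, and each `|λₖ - εₖ|` is bounded by `‖Σ - Π̃‖` as in Weyl's inequality, `ε` being
the spectrum of `Π̃`. Testing the quadratic form of `Σ - Π̃` on `uₖ` gives `-‖Σ - Π̃‖ ≤ λₖ` and
`λₖ - 1 ≤ ‖Σ - Π̃‖`. The other bound comes from a unit vector, found by counting dimensions, in
`span {uⱼ | j ≥ k} ∩ range Π̃` when `k < d`, and in `span {uⱼ | j ≤ k} ∩ ker Π̃` when `k ≥ d`.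
-/

open MeasureTheory Metric Set

noncomputable section

/-- The rank-one operator `z ⊗ z : x ↦ ⟪z, x⟫ z` on `ℝⁿ`. -/
def rankOne {n : ℕ} (z : EuclideanSpace ℝ (Fin n)) :
    EuclideanSpace ℝ (Fin n) →L[ℝ] EuclideanSpace ℝ (Fin n) :=
  (innerSL ℝ z).smulRight z

open Module Submodule
open scoped InnerProductSpace

lemma exists_norm_eq_one_mem_of_finrank_lt_add {E : Type*} [NormedAddCommGroup E]
    [NormedSpace ℝ E] [FiniteDimensional ℝ E] {s t : Submodule ℝ E}
    (h : finrank ℝ E < finrank ℝ s + finrank ℝ t) : ∃ x : E, ‖x‖ = 1 ∧ x ∈ s ∧ x ∈ t := by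
  have hsup : finrank ℝ ↥(s ⊔ t) ≤ finrank ℝ E := Submodule.finrank_le _
  have hinf : s ⊓ t ≠ ⊥ := by
    intro hbot
    have := Submodule.finrank_sup_add_finrank_inf_eq s t
    rw [hbot, finrank_bot] at this
    omega
  obtain ⟨x, hx, hx0⟩ := Submodule.exists_mem_ne_zero_of_ne_bot hinf
  exact ⟨(‖x‖⁻¹ : ℝ) • x, norm_smul_inv_norm hx0, s.smul_mem _ hx.1, t.smul_mem _ hx.2⟩

section Orthonormal

variable {E : Type*} [NormedAddCommGroup E] [InnerProductSpace ℝ E]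

lemma abs_inner_apply_self_le_opNorm (T : E →L[ℝ] E) {x : E} (hx : ‖x‖ = 1) :
    |⟪x, T x⟫_ℝ| ≤ ‖T‖ :=
  calc |⟪x, T x⟫_ℝ| ≤ ‖x‖ * ‖T x‖ := abs_real_inner_le_norm _ _
    _ ≤ ‖x‖ * (‖T‖ * ‖x‖) := by gcongr; exact T.le_opNorm x
    _ = ‖T‖ := by rw [hx, one_mul, mul_one]

variable {ι : Type*} {v : ι → E}

lemma Orthonormal.inner_eq_zero_of_mem_span_image (hv : Orthonormal ℝ v) {s : Set ι} {i : ι}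
    (hi : i ∉ s) {x : E} (hx : x ∈ span ℝ (v '' s)) : ⟪v i, x⟫_ℝ = 0 := by
  have hle : span ℝ (v '' s) ≤ (ℝ ∙ v i)ᗮ := by
    rw [span_le]
    rintro _ ⟨j, hj, rfl⟩
    exact mem_orthogonal_singleton_iff_inner_right.mpr
      (hv.inner_eq_zero (ne_of_mem_of_not_mem hj hi).symm)
  exact mem_orthogonal_singleton_iff_inner_right.mp (hle hx)

lemma Orthonormal.finrank_span_image (hv : Orthonormal ℝ v) (s : Finset ι) :
    finrank ℝ (span ℝ (v '' s)) = s.card := by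
  have hli : LinearIndependent ℝ (fun i : (s : Set ι) => v i) :=
    hv.linearIndependent.comp _ Subtype.val_injective
  rw [Set.image_eq_range, finrank_span_eq_card hli]
  simp

lemma Orthonormal.sum_inner_sq_eq_norm_sq_of_mem_span [Fintype ι] (hv : Orthonormal ℝ v) {x : E}
    (hx : x ∈ span ℝ (range v)) : ∑ i, ⟪v i, x⟫_ℝ ^ 2 = ‖x‖ ^ 2 := by
  obtain ⟨c, rfl⟩ := (mem_span_range_iff_exists_fun ℝ).mp hx
  rw [← real_inner_self_eq_norm_sq, hv.inner_sum]
  simp [hv.inner_right_fintype, sq]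

lemma Orthonormal.le_sum_mul_inner_sq_of_mem_span_image [Fintype ι] (hv : Orthonormal ℝ v)
    {s : Set ι} {w : ι → ℝ} {c : ℝ} (hw : ∀ i ∈ s, c ≤ w i) {x : E} (hx : x ∈ span ℝ (v '' s)) :
    c * ‖x‖ ^ 2 ≤ ∑ i, w i * ⟪v i, x⟫_ℝ ^ 2 := by
  rw [← hv.sum_inner_sq_eq_norm_sq_of_mem_span (span_mono (image_subset_range v s) hx),
    Finset.mul_sum]
  refine Finset.sum_le_sum fun i _ => ?_
  by_cases hi : i ∈ s
  · exact mul_le_mul_of_nonneg_right (hw i hi) (sq_nonneg _)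
  · simp [hv.inner_eq_zero_of_mem_span_image hi hx]

lemma Orthonormal.sum_mul_inner_sq_le_of_mem_span_image [Fintype ι] (hv : Orthonormal ℝ v)
    {s : Set ι} {w : ι → ℝ} {c : ℝ} (hw : ∀ i ∈ s, w i ≤ c) {x : E} (hx : x ∈ span ℝ (v '' s)) :
    ∑ i, w i * ⟪v i, x⟫_ℝ ^ 2 ≤ c * ‖x‖ ^ 2 := by
  have := hv.le_sum_mul_inner_sq_of_mem_span_image (w := -w) (c := -c)
    (fun i hi => neg_le_neg (hw i hi)) hx
  simpa only [Pi.neg_apply, neg_mul, Finset.sum_neg_distrib, neg_le_neg_iff] using this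

end Orthonormal

section RankOne

variable {n : ℕ} {ι : Type*} [Fintype ι]

lemma rankOne_apply (z x : EuclideanSpace ℝ (Fin n)) : rankOne z x = ⟪z, x⟫_ℝ • z := rfl

lemma sum_smul_rankOne_apply (w : ι → ℝ) (v : ι → EuclideanSpace ℝ (Fin n))
    (x : EuclideanSpace ℝ (Fin n)) :
    (∑ i, w i • rankOne (v i)) x = ∑ i, (w i * ⟪v i, x⟫_ℝ) • v i := by
  simp only [sum_apply, smul_apply, rankOne_apply, smul_smul]

lemma inner_sum_smul_rankOne_apply_self (w : ι → ℝ) (v : ι → EuclideanSpace ℝ (Fin n))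
    (x : EuclideanSpace ℝ (Fin n)) :
    ⟪x, (∑ i, w i • rankOne (v i)) x⟫_ℝ = ∑ i, w i * ⟪v i, x⟫_ℝ ^ 2 := by
  simp only [sum_smul_rankOne_apply, inner_sum, real_inner_smul_right, real_inner_comm x]
  exact Finset.sum_congr rfl fun i _ => by ring

lemma inner_sum_rankOne_apply_self (v : ι → EuclideanSpace ℝ (Fin n))
    (x : EuclideanSpace ℝ (Fin n)) :
    ⟪x, (∑ i, rankOne (v i)) x⟫_ℝ = ∑ i, ⟪v i, x⟫_ℝ ^ 2 := by
  simpa using inner_sum_smul_rankOne_apply_self (fun _ => 1) v x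

lemma Orthonormal.inner_sum_smul_rankOne_apply_self_eq {u : ι → EuclideanSpace ℝ (Fin n)}
    (hu : Orthonormal ℝ u) (w : ι → ℝ) (k : ι) :
    ⟪u k, (∑ i, w i • rankOne (u i)) (u k)⟫_ℝ = w k := by
  classical
  rw [inner_sum_smul_rankOne_apply_self]
  simp [orthonormal_iff_ite.mp hu]

lemma sum_smul_rankOne_sub_sum_filter_rankOne (w : ι → ℝ) (v : ι → EuclideanSpace ℝ (Fin n))
    (p : ι → Prop) [DecidablePred p] :
    ∑ i, w i • rankOne (v i) - ∑ i ∈ Finset.univ.filter p, rankOne (v i) =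
      ∑ i, (w i - if p i then 1 else 0) • rankOne (v i) := by
  rw [Finset.sum_filter, ← Finset.sum_sub_distrib]
  refine Finset.sum_congr rfl fun i _ => ?_
  split_ifs <;> module

lemma norm_sum_smul_rankOne_le {u : ι → EuclideanSpace ℝ (Fin n)} (hu : Orthonormal ℝ u)
    {w : ι → ℝ} {M : ℝ} (hM : 0 ≤ M) (hw : ∀ i, |w i| ≤ M) :
    ‖∑ i, w i • rankOne (u i)‖ ≤ M := by
  refine ContinuousLinearMap.opNorm_le_bound _ hM fun x => ?_
  have hsq : ‖(∑ i, w i • rankOne (u i)) x‖ ^ 2 ≤ (M * ‖x‖) ^ 2 :=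
    calc ‖(∑ i, w i • rankOne (u i)) x‖ ^ 2 = ∑ i, w i ^ 2 * ⟪u i, x⟫_ℝ ^ 2 := by
          rw [sum_smul_rankOne_apply, ← real_inner_self_eq_norm_sq, hu.inner_sum]
          exact Finset.sum_congr rfl fun i _ => by simp only [conj_trivial]; ring
      _ ≤ ∑ i, M ^ 2 * ⟪u i, x⟫_ℝ ^ 2 := by
          gcongr ∑ i, ?_ * _ with i
          exact sq_le_sq' (abs_le.mp (hw i)).1 (abs_le.mp (hw i)).2
      _ ≤ M ^ 2 * ‖x‖ ^ 2 := by
          rw [← Finset.mul_sum]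
          gcongr
          simpa only [Real.norm_eq_abs, sq_abs] using hu.sum_inner_products_le x
      _ = (M * ‖x‖) ^ 2 := by ring
  exact (pow_le_pow_iff_left₀ (norm_nonneg _) (by positivity) two_ne_zero).mp hsq

end RankOne

section EigenvalueBounds

variable {n : ℕ} {ι κ : Type*} [Fintype ι] [Fintype κ] {u : ι → EuclideanSpace ℝ (Fin n)}
  {v : κ → EuclideanSpace ℝ (Fin n)}

lemma Orthonormal.inner_sum_smul_rankOne_sub_sum_rankOne_apply_self (hu : Orthonormal ℝ u)
    (lam : ι → ℝ) (v : κ → EuclideanSpace ℝ (Fin n)) (k : ι) :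
    ⟪u k, (∑ j, lam j • rankOne (u j) - ∑ i, rankOne (v i)) (u k)⟫_ℝ =
      lam k - ∑ i, ⟪v i, u k⟫_ℝ ^ 2 := by
  rw [sub_apply, inner_sub_right, hu.inner_sum_smul_rankOne_apply_self_eq,
    inner_sum_rankOne_apply_self]

lemma neg_norm_sum_smul_rankOne_sub_sum_rankOne_le (hu : Orthonormal ℝ u) (lam : ι → ℝ)
    (v : κ → EuclideanSpace ℝ (Fin n)) (k : ι) :
    -‖∑ j, lam j • rankOne (u j) - ∑ i, rankOne (v i)‖ ≤ lam k := by
  refine neg_le.mpr (le_trans ?_ (abs_inner_apply_self_le_opNorm _ (hu.norm_eq_one k)))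
  rw [hu.inner_sum_smul_rankOne_sub_sum_rankOne_apply_self]
  have : 0 ≤ ∑ i, ⟪v i, u k⟫_ℝ ^ 2 := by positivity
  exact le_abs.mpr (Or.inr (by linarith))

lemma sub_one_le_norm_sum_smul_rankOne_sub_sum_rankOne (hu : Orthonormal ℝ u) (lam : ι → ℝ)
    (hv : Orthonormal ℝ v) (k : ι) :
    lam k - 1 ≤ ‖∑ j, lam j • rankOne (u j) - ∑ i, rankOne (v i)‖ := by
  refine le_trans ?_ (abs_inner_apply_self_le_opNorm _ (hu.norm_eq_one k))
  rw [hu.inner_sum_smul_rankOne_sub_sum_rankOne_apply_self]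
  have : ∑ i, ⟪v i, u k⟫_ℝ ^ 2 ≤ 1 := by
    simpa [hu.norm_eq_one] using hv.sum_inner_products_le (u k) (s := Finset.univ)
  exact le_abs.mpr (Or.inl (by linarith))

end EigenvalueBounds

section CourantFischer

variable {n d : ℕ} {u : Fin n → EuclideanSpace ℝ (Fin n)} {lam : Fin n → ℝ}
  {v : Fin d → EuclideanSpace ℝ (Fin n)}

lemma one_sub_le_norm_sum_smul_rankOne_sub_sum_rankOne (hu : Orthonormal ℝ u)
    (hlam : Antitone lam) (hv : Orthonormal ℝ v) {k : Fin n} (hk : (k : ℕ) < d) :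
    1 - lam k ≤ ‖∑ j, lam j • rankOne (u j) - ∑ i, rankOne (v i)‖ := by
  obtain ⟨y, hy, hyu, hyv⟩ := exists_norm_eq_one_mem_of_finrank_lt_add
    (s := span ℝ (u '' ↑(Finset.Ici k))) (t := span ℝ (range v)) (by
      rw [finrank_euclideanSpace_fin, hu.finrank_span_image, Fin.card_Ici,
        finrank_span_eq_card hv.linearIndependent, Fintype.card_fin]
      omega)
  have hS : ⟪y, (∑ j, lam j • rankOne (u j)) y⟫_ℝ ≤ lam k := by
    rw [inner_sum_smul_rankOne_apply_self]
    simpa [hy] using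
      hu.sum_mul_inner_sq_le_of_mem_span_image (fun j hj => hlam (Finset.mem_Ici.mp hj)) hyu
  have hP : ⟪y, (∑ i, rankOne (v i)) y⟫_ℝ = 1 := by
    rw [inner_sum_rankOne_apply_self, hv.sum_inner_sq_eq_norm_sq_of_mem_span hyv, hy, one_pow]
  refine le_trans ?_ (abs_inner_apply_self_le_opNorm _ hy)
  rw [sub_apply, inner_sub_right, hP]
  exact le_abs.mpr (Or.inr (by linarith))

lemma le_norm_sum_smul_rankOne_sub_sum_rankOne (hu : Orthonormal ℝ u)
    (hlam : Antitone lam) (hv : Orthonormal ℝ v) {k : Fin n} (hk : d ≤ (k : ℕ)) :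
    lam k ≤ ‖∑ j, lam j • rankOne (u j) - ∑ i, rankOne (v i)‖ := by
  have hV := finrank_add_finrank_orthogonal (span ℝ (range v))
  rw [finrank_span_eq_card hv.linearIndependent, Fintype.card_fin,
    finrank_euclideanSpace_fin] at hV
  obtain ⟨y, hy, hyu, hyv⟩ := exists_norm_eq_one_mem_of_finrank_lt_add
    (s := span ℝ (u '' ↑(Finset.Iic k))) (t := (span ℝ (range v))ᗮ) (by
      rw [finrank_euclideanSpace_fin, hu.finrank_span_image, Fin.card_Iic]
      omega)
  have hS : lam k ≤ ⟪y, (∑ j, lam j • rankOne (u j)) y⟫_ℝ := by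
    rw [inner_sum_smul_rankOne_apply_self]
    simpa [hy] using
      hu.le_sum_mul_inner_sq_of_mem_span_image (fun j hj => hlam (Finset.mem_Iic.mp hj)) hyu
  have hP : ⟪y, (∑ i, rankOne (v i)) y⟫_ℝ = 0 := by
    rw [inner_sum_rankOne_apply_self]
    refine Finset.sum_eq_zero fun i _ => ?_
    rw [inner_right_of_mem_orthogonal (subset_span (mem_range_self i)) hyv, sq, mul_zero]
  refine le_trans ?_ (abs_inner_apply_self_le_opNorm _ hy)
  rw [sub_apply, inner_sub_right, hP, sub_zero]
  exact hS.trans (le_abs_self _)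

end CourantFischer

theorem stmt_16_general {n d : ℕ}
    (u : Fin n → EuclideanSpace ℝ (Fin n)) (hu : Orthonormal ℝ u)
    (lam : Fin n → ℝ) (hmono : Antitone lam)
    (Sig : EuclideanSpace ℝ (Fin n) →L[ℝ] EuclideanSpace ℝ (Fin n))
    (hSig : Sig = ∑ k : Fin n, lam k • rankOne (u k))
    (Pi : EuclideanSpace ℝ (Fin n) →L[ℝ] EuclideanSpace ℝ (Fin n))
    (hPi : Pi = ∑ k ∈ Finset.univ.filter (fun k : Fin n => (k : ℕ) < d), rankOne (u k))
    (Pit : EuclideanSpace ℝ (Fin n) →L[ℝ] EuclideanSpace ℝ (Fin n))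
    (hPit : ∃ v : Fin d → EuclideanSpace ℝ (Fin n),
      Orthonormal ℝ v ∧ Pit = ∑ i : Fin d, rankOne (v i)) :
    ‖Sig - Pi‖ ≤ ‖Sig - Pit‖ := by
  obtain ⟨v, hv, rfl⟩ := hPit
  subst hSig hPi
  rw [sum_smul_rankOne_sub_sum_filter_rankOne]
  refine norm_sum_smul_rankOne_le hu (norm_nonneg _) fun k => abs_le.mpr ?_
  by_cases hk : (k : ℕ) < d
  · rw [if_pos hk]
    exact ⟨by linarith [one_sub_le_norm_sum_smul_rankOne_sub_sum_rankOne hu hmono hv hk],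
      sub_one_le_norm_sum_smul_rankOne_sub_sum_rankOne hu lam hv k⟩
  · rw [if_neg hk, sub_zero]
    exact ⟨neg_norm_sum_smul_rankOne_sub_sum_rankOne_le hu lam v k,
      le_norm_sum_smul_rankOne_sub_sum_rankOne hu hmono hv (not_lt.mp hk)⟩

/-- Let `Σ = ∑ₖ λₖ uₖ ⊗ uₖ` be positive semidefinite symmetric (with `u` an orthonormal
eigenbasis and `λ` nonincreasing, nonnegative), and let `Π = ∑_{k<d} uₖ ⊗ uₖ` be the
projector onto the span of the eigenvectors of the `d` largest eigenvalues. Then for every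
rank-`d` orthogonal projector `Π̃`, `‖Σ − Π‖ ≤ ‖Σ − Π̃‖` in operator norm. -/
theorem stmt_16 {n d : ℕ} (hdn : d ≤ n)
    (u : Fin n → EuclideanSpace ℝ (Fin n)) (hu : Orthonormal ℝ u)
    (lam : Fin n → ℝ) (hmono : Antitone lam) (hnn : ∀ k, 0 ≤ lam k)
    (Sig : EuclideanSpace ℝ (Fin n) →L[ℝ] EuclideanSpace ℝ (Fin n))
    (hSig : Sig = ∑ k : Fin n, lam k • rankOne (u k))
    (Pi : EuclideanSpace ℝ (Fin n) →L[ℝ] EuclideanSpace ℝ (Fin n))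
    (hPi : Pi = ∑ k ∈ Finset.univ.filter (fun k : Fin n => (k : ℕ) < d), rankOne (u k))
    (Pit : EuclideanSpace ℝ (Fin n) →L[ℝ] EuclideanSpace ℝ (Fin n))
    (hPit : ∃ v : Fin d → EuclideanSpace ℝ (Fin n),
      Orthonormal ℝ v ∧ Pit = ∑ i : Fin d, rankOne (v i)) :
    ‖Sig - Pi‖ ≤ ‖Sig - Pit‖ :=
  stmt_16_general u hu lam hmono Sig hSig Pi hPi Pit hPit

end
end

section
/- Let S, S_{sg,l} ⊂ ℝⁿ be sets such that ℋ^d|_S is d-Ahlfors regular with constant C̃₀ and ℋ^l|_{S_{sg,l}} is l-Ahlfors regular with constant C on scales up to R (for some 0 ≤ l < d and R ∈ (0,1)). Then for every Borel set D ⊂ ℝⁿ and every 0 < ρ ≤ R, ℋ^d(S_{sg,l}^ρ ∩ D ∩ S) ≤ M ρ^{d−l} ℋ^l(S_{sg,l} ∩ D^{2ρ}), where M depends only on d, C̃₀, C, and A^ρ denotes the open ρ-neighbourhood of A. -/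
/-!
Take a Vitali family of disjoint balls `B(b, ρ)` centred at the points of `Ssg` lying within `ρ`
of `D ∩ S`; the balls `B(b, 5ρ)` then cover `Ssg^ρ ∩ D ∩ S`. Each `B(b, 5ρ)` lies in a ball of
radius `6ρ` centred on `S`, so its `ℋ^d`-mass is `≲ ρ^d` by upper regularity of `S`; each `B(b, ρ)`
lies in `D^{2ρ}` and carries `ℋ^l`-mass `≳ ρ^l` on `Ssg` by lower regularity. Summing over the
disjoint balls gives the bound. Upper regularity of `S` is only assumed below `diam S`; above it,
`S` is covered by `6ⁿ` balls of radius `diam S`, counted by comparing Lebesgue volumes.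
-/

open Module MeasureTheory Metric Set TopologicalSpace
open scoped ENNReal

theorem exists_countable_pairwiseDisjoint_closedBall_cover {α : Type*} [PseudoMetricSpace α]
    [SeparableSpace α] (Y : Set α) {r : ℝ} (hr : 0 < r) :
    ∃ u ⊆ Y, u.Countable ∧ u.PairwiseDisjoint (closedBall · r) ∧
      Y ⊆ ⋃ b ∈ u, closedBall b (4 * r) := by
  obtain ⟨u, huY, hdisj, hcov⟩ :=
    Vitali.exists_disjoint_subfamily_covering_enlargement_closedBall Y id (fun _ => r) r
      (fun _ _ => le_rfl) 4 (by norm_num)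
  refine ⟨u, huY, hdisj.countable_of_nonempty_interior fun b _ => ?_, hdisj, fun y hy => ?_⟩
  · exact ⟨b, ball_subset_interior_closedBall (mem_ball_self hr)⟩
  · obtain ⟨b, hb, hsub⟩ := hcov y hy
    exact mem_biUnion hb (hsub (mem_closedBall_self hr.le))

section FiniteDimensional

variable {E : Type*} [NormedAddCommGroup E] [NormedSpace ℝ E] [FiniteDimensional ℝ E]

theorem card_le_pow_finrank_of_pairwiseDisjoint_closedBall {u : Set E} {x : E} {r : ℝ} {k : ℕ}
    (hr : 0 < r) (hu : u.PairwiseDisjoint (closedBall · r))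
    (hsub : ∀ b ∈ u, closedBall b r ⊆ closedBall x (k * r)) :
    ENat.card u ≤ k ^ finrank ℝ E := by
  borelize E
  let μ : Measure E := Measure.addHaar
  have hu_countable : u.Countable := hu.countable_of_nonempty_interior fun b _ =>
    ⟨b, ball_subset_interior_closedBall (mem_ball_self hr)⟩
  have h0 : μ (closedBall 0 r) ≠ 0 := (measure_closedBall_pos μ 0 hr).ne'
  have htop : μ (closedBall 0 r) ≠ ∞ := measure_closedBall_lt_top.ne
  suffices (ENat.card u : ℝ≥0∞) * μ (closedBall 0 r) ≤
      (k : ℝ≥0∞) ^ finrank ℝ E * μ (closedBall 0 r) by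
    exact_mod_cast (ENNReal.mul_le_mul_iff_left h0 htop).1 this
  calc (ENat.card u : ℝ≥0∞) * μ (closedBall 0 r) = ∑' b : u, μ (closedBall (b : E) r) := by
        simp only [Measure.addHaar_closedBall_center μ _ r, ENNReal.tsum_const]
    _ = μ (⋃ b ∈ u, closedBall b r) :=
        (measure_biUnion hu_countable hu fun _ _ => measurableSet_closedBall).symm
    _ ≤ μ (closedBall x (k * r)) := measure_mono (iUnion₂_subset hsub)
    _ = (k : ℝ≥0∞) ^ finrank ℝ E * μ (closedBall 0 r) := by
        rw [Measure.addHaar_closedBall_mul μ x k.cast_nonneg hr.le,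
          ENNReal.ofReal_pow k.cast_nonneg, ENNReal.ofReal_natCast]

variable [MeasurableSpace E]

theorem measure_le_pow_finrank_mul_of_ediam_le (μ : Measure E) {S : Set E} {t : ℝ} {c : ℝ≥0∞}
    (ht : 0 < t) (hS : ediam S ≤ ENNReal.ofReal t) (hc : ∀ x ∈ S, μ (S ∩ ball x t) ≤ c) :
    μ S ≤ 6 ^ finrank ℝ E * c := by
  rcases S.eq_empty_or_nonempty with rfl | ⟨x₀, hx₀⟩
  · simp
  obtain ⟨u, huS, hu_countable, hdisj, hcov⟩ :=
    exists_countable_pairwiseDisjoint_closedBall_cover S (show 0 < t / 5 by positivity)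
  have hcard : ENat.card u ≤ 6 ^ finrank ℝ E := by
    refine card_le_pow_finrank_of_pairwiseDisjoint_closedBall (x := x₀) (by positivity) hdisj
      fun b hb => closedBall_subset_closedBall' ?_
    have : dist b x₀ ≤ t :=
      (edist_le_ofReal ht.le).1 <| (edist_le_ediam_of_mem (huS hb) hx₀).trans hS
    push_cast
    linarith
  have hcov' : S ⊆ ⋃ b ∈ u, S ∩ ball b t := fun y hy => by
    obtain ⟨b, hb, hyb⟩ := mem_iUnion₂.1 (hcov hy)
    exact mem_biUnion hb ⟨hy, (mem_closedBall.1 hyb).trans_lt (by linarith)⟩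
  calc μ S ≤ ∑' b : u, μ (S ∩ ball (b : E) t) :=
        (measure_mono hcov').trans (measure_biUnion_le _ hu_countable _)
    _ ≤ ∑' _ : u, c := ENNReal.tsum_le_tsum fun b => hc b (huS b.2)
    _ ≤ 6 ^ finrank ℝ E * c := by
        rw [ENNReal.tsum_const]
        gcongr
        exact_mod_cast hcard

theorem measure_inter_ball_le_of_forall_le_ediam (μ : Measure E) [NullSingletonClass μ]
    {S : Set E} {d : ℕ} {K : ℝ} (hK : 0 ≤ K)
    (hS : ∀ x ∈ S, ∀ r : ℝ, 0 < r → ENNReal.ofReal r ≤ ediam S →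
      μ (S ∩ ball x r) ≤ ENNReal.ofReal (K * r ^ d))
    {x : E} (hx : x ∈ S) {r : ℝ} (hr : 0 < r) :
    μ (S ∩ ball x r) ≤ ENNReal.ofReal (6 ^ finrank ℝ E * K * r ^ d) := by
  by_cases hrS : ENNReal.ofReal r ≤ ediam S
  · refine (hS x hx r hr hrS).trans (ENNReal.ofReal_le_ofReal ?_)
    rw [mul_assoc]
    exact le_mul_of_one_le_left (by positivity) (one_le_pow₀ (by norm_num))
  push Not at hrS
  obtain ⟨t, ht0, hdiam⟩ : ∃ t : ℝ, 0 ≤ t ∧ ediam S = ENNReal.ofReal t :=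
    ⟨(ediam S).toReal, ENNReal.toReal_nonneg, (ENNReal.ofReal_toReal hrS.ne_top).symm⟩
  have htr : t < r := by rwa [hdiam, ENNReal.ofReal_lt_ofReal_iff hr] at hrS
  rcases ht0.eq_or_lt with rfl | ht
  · have hS_sub : S.Subsingleton := ediam_eq_zero_iff.1 (by rw [hdiam, ENNReal.ofReal_zero])
    calc μ (S ∩ ball x r) ≤ μ {x} := measure_mono fun y hy => hS_sub hy.1 hx
      _ = 0 := measure_singleton x
      _ ≤ _ := zero_le
  calc μ (S ∩ ball x r) ≤ μ S := measure_mono inter_subset_left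
    _ ≤ 6 ^ finrank ℝ E * ENNReal.ofReal (K * t ^ d) :=
        measure_le_pow_finrank_mul_of_ediam_le μ ht hdiam.le fun y hy => hS y hy t ht hdiam.ge
    _ ≤ ENNReal.ofReal (6 ^ finrank ℝ E * K * r ^ d) := by
        rw [mul_assoc, ENNReal.ofReal_mul (by positivity : (0 : ℝ) ≤ 6 ^ finrank ℝ E),
          ENNReal.ofReal_pow (by norm_num), ENNReal.ofReal_ofNat]
        gcongr

end FiniteDimensional

theorem measure_le_mul_of_forall_measure_inter_ball_le {α : Type*} [PseudoMetricSpace α]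
    [SeparableSpace α] [MeasurableSpace α] [OpensMeasurableSpace α]
    (μ ν : Measure α) {T Y : Set α} {ρ : ℝ} {a : ℝ≥0∞} (hρ : 0 < ρ)
    (hTY : T ⊆ thickening ρ Y) (hY : ∀ y ∈ Y, μ (T ∩ ball y (5 * ρ)) ≤ a * ν (ball y ρ)) :
    μ T ≤ a * ν univ := by
  obtain ⟨u, huY, hu_countable, hdisj, hcov⟩ :=
    exists_countable_pairwiseDisjoint_closedBall_cover Y hρ
  have hT : T ⊆ ⋃ b ∈ u, T ∩ ball b (5 * ρ) := fun z hz => by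
    obtain ⟨y, hy, hzy⟩ := mem_thickening_iff.1 (hTY hz)
    obtain ⟨b, hb, hyb⟩ := mem_iUnion₂.1 (hcov hy)
    refine mem_biUnion hb ⟨hz, ?_⟩
    calc dist z b ≤ dist z y + dist y b := dist_triangle z y b
      _ < 5 * ρ := by linarith [mem_closedBall.1 hyb]
  calc μ T ≤ ∑' b : u, μ (T ∩ ball (b : α) (5 * ρ)) :=
        (measure_mono hT).trans (measure_biUnion_le _ hu_countable _)
    _ ≤ ∑' b : u, a * ν (ball (b : α) ρ) := ENNReal.tsum_le_tsum fun b => hY b (huY b.2)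
    _ = a * ∑' b : u, ν (ball (b : α) ρ) := ENNReal.tsum_mul_left
    _ ≤ a * ν univ := by
        gcongr
        refine tsum_measure_le_measure_univ (fun _ => measurableSet_ball.nullMeasurableSet)
          fun b c hbc => Disjoint.aedisjoint ?_
        exact (hdisj b.2 c.2 (Subtype.coe_injective.ne hbc)).mono ball_subset_closedBall
          ball_subset_closedBall

theorem stmt_19_general {n d l : ℕ} (hl : l < d)
    (Ct₀ C : ℝ) (hCt₀ : 1 ≤ Ct₀) (hC : 1 ≤ C) :
    ∃ M : ℝ, 0 < M ∧
      ∀ (S Ssg : Set (EuclideanSpace ℝ (Fin n))) (R : ℝ), 0 < R → R < 1 →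
      (∀ x ∈ S, ∀ r : ℝ, 0 < r → ENNReal.ofReal r ≤ EMetric.diam S →
        ENNReal.ofReal (Ct₀⁻¹ * r ^ d) ≤ μH[(d : ℝ)] (S ∩ ball x r) ∧
          μH[(d : ℝ)] (S ∩ ball x r) ≤ ENNReal.ofReal (Ct₀ * r ^ d)) →
      (∀ x ∈ Ssg, ∀ r : ℝ, 0 < r → r ≤ R →
        ENNReal.ofReal (C⁻¹ * r ^ l) ≤ μH[(l : ℝ)] (Ssg ∩ ball x r) ∧
          μH[(l : ℝ)] (Ssg ∩ ball x r) ≤ ENNReal.ofReal (C * r ^ l)) →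
      ∀ (D : Set (EuclideanSpace ℝ (Fin n))), MeasurableSet D →
      ∀ ρ : ℝ, 0 < ρ → ρ ≤ R →
        μH[(d : ℝ)] (thickening ρ Ssg ∩ D ∩ S) ≤
          ENNReal.ofReal (M * ρ ^ (d - l)) * μH[(l : ℝ)] (Ssg ∩ thickening (2 * ρ) D) := by
  refine ⟨6 ^ n * Ct₀ * 6 ^ d * C, by positivity, ?_⟩
  intro S Ssg R _ _ hS hSsg D _ ρ hρ hρR
  have : NullSingletonClass (μH[(d : ℝ)] : Measure (EuclideanSpace ℝ (Fin n))) :=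
    Measure.nullSingletonClass_hausdorff _ (by exact_mod_cast (Nat.zero_le l).trans_lt hl)
  have hρd : ρ ^ d = ρ ^ (d - l) * ρ ^ l := by rw [← pow_add, Nat.sub_add_cancel hl.le]
  refine (measure_le_mul_of_forall_measure_inter_ball_le μH[(d : ℝ)]
    (μH[(l : ℝ)].restrict (Ssg ∩ thickening (2 * ρ) D)) (Y := Ssg ∩ thickening ρ (D ∩ S)) hρ
    ?_ ?_).trans_eq (by rw [Measure.restrict_apply_univ])
  · rintro z ⟨⟨hz, hzD⟩, hzS⟩
    obtain ⟨y, hy, hzy⟩ := mem_thickening_iff.1 hz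
    exact mem_thickening_iff.2
      ⟨y, ⟨hy, mem_thickening_iff.2 ⟨z, ⟨hzD, hzS⟩, by rwa [dist_comm]⟩⟩, hzy⟩
  rintro y ⟨hy, hyDS⟩
  obtain ⟨x, ⟨hxD, hxS⟩, hyx⟩ := mem_thickening_iff.1 hyDS
  have hS_ball : (thickening ρ Ssg ∩ D ∩ S) ∩ ball y (5 * ρ) ⊆ S ∩ ball x (6 * ρ) :=
    fun z hz => ⟨hz.1.2, mem_ball.2 (by linarith [dist_triangle z y x, mem_ball.1 hz.2])⟩
  have hSsg_ball : Ssg ∩ ball y ρ ⊆ ball y ρ ∩ (Ssg ∩ thickening (2 * ρ) D) :=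
    fun z hz => ⟨hz.2, hz.1, mem_thickening_iff.2
      ⟨x, hxD, by linarith [dist_triangle z y x, mem_ball.1 hz.2]⟩⟩
  calc μH[(d : ℝ)] ((thickening ρ Ssg ∩ D ∩ S) ∩ ball y (5 * ρ))
      ≤ μH[(d : ℝ)] (S ∩ ball x (6 * ρ)) := measure_mono hS_ball
    _ ≤ ENNReal.ofReal (6 ^ n * Ct₀ * (6 * ρ) ^ d) := by
        simpa using measure_inter_ball_le_of_forall_le_ediam μH[(d : ℝ)] (by positivity)
          (fun x hx r hr h => (hS x hx r hr h).2) hxS (by positivity : 0 < 6 * ρ)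
    _ = ENNReal.ofReal (6 ^ n * Ct₀ * 6 ^ d * C * ρ ^ (d - l)) *
          ENNReal.ofReal (C⁻¹ * ρ ^ l) := by
        rw [← ENNReal.ofReal_mul (by positivity), mul_pow, hρd]
        field_simp
    _ ≤ ENNReal.ofReal (6 ^ n * Ct₀ * 6 ^ d * C * ρ ^ (d - l)) *
          μH[(l : ℝ)].restrict (Ssg ∩ thickening (2 * ρ) D) (ball y ρ) := by
        rw [Measure.restrict_apply measurableSet_ball]
        gcongr
        exact (hSsg y hy ρ hρ hρR).1.trans (measure_mono hSsg_ball)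

/-- If `ℋ^d|_S` is `d`-Ahlfors regular with constant `C̃₀` and `ℋ^l|_{S_{sg}}` is
`l`-Ahlfors regular with constant `C` on scales up to `R` (with `l < d`), then there is
`M = M(d, C̃₀, C) > 0` such that for every Borel `D` and `0 < ρ ≤ R`,
`ℋ^d(S_{sg}^ρ ∩ D ∩ S) ≤ M ρ^{d−l} ℋ^l(S_{sg} ∩ D^{2ρ})`. -/
theorem stmt_19 {n d l : ℕ} (hl : l < d) (hdn : d ≤ n)
    (Ct₀ C : ℝ) (hCt₀ : 1 ≤ Ct₀) (hC : 1 ≤ C) :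
    ∃ M : ℝ, 0 < M ∧
      ∀ (S Ssg : Set (EuclideanSpace ℝ (Fin n))) (R : ℝ), 0 < R → R < 1 →
      (∀ x ∈ S, ∀ r : ℝ, 0 < r → ENNReal.ofReal r ≤ EMetric.diam S →
        ENNReal.ofReal (Ct₀⁻¹ * r ^ d) ≤ μH[(d : ℝ)] (S ∩ ball x r) ∧
          μH[(d : ℝ)] (S ∩ ball x r) ≤ ENNReal.ofReal (Ct₀ * r ^ d)) →
      (∀ x ∈ Ssg, ∀ r : ℝ, 0 < r → r ≤ R →
        ENNReal.ofReal (C⁻¹ * r ^ l) ≤ μH[(l : ℝ)] (Ssg ∩ ball x r) ∧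
          μH[(l : ℝ)] (Ssg ∩ ball x r) ≤ ENNReal.ofReal (C * r ^ l)) →
      ∀ (D : Set (EuclideanSpace ℝ (Fin n))), MeasurableSet D →
      ∀ ρ : ℝ, 0 < ρ → ρ ≤ R →
        μH[(d : ℝ)] (thickening ρ Ssg ∩ D ∩ S) ≤
          ENNReal.ofReal (M * ρ ^ (d - l)) * μH[(l : ℝ)] (Ssg ∩ thickening (2 * ρ) D) :=
  stmt_19_general hl Ct₀ C hCt₀ hC
end
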